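/- Let Γ be a group, H a normal subgroup of finite index in Γ, and R a ring. If Moore's condition does not hold for the triple (Γ,H,R), then there exists a left module M over the group ring RΓ which is free as a module over the subring RH but is not projective as an RΓ-module. -/

import Mathlib

open Pointwise

/-- `𝒜` is a strongly `Γ`-graded ring structure on the ring `A`:  `A` is the internal direct
sum of the additive subgroups `𝒜 g` (`g ∈ Γ`), and `A_g · A_h = A_{g·h}` for all `g h : Γ`
(the inclusion `A_g · A_h ⊆ A_{g·h}` is the field `mul_mem`; the reverse inclusion, saying the
grading is *strong*, is the field `strong`). -/
structure IsStronglyGraded {Γ : Type*} [Group Γ] {A : Type*} [Ring A]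
    (𝒜 : Γ → AddSubgroup A) : Prop where
  independent : iSupIndep 𝒜
  iSup_eq_top : ⨆ g, 𝒜 g = ⊤
  one_mem : (1 : A) ∈ 𝒜 1
  mul_mem : ∀ {g h : Γ} {a b : A}, a ∈ 𝒜 g → b ∈ 𝒜 h → a * b ∈ 𝒜 (g * h)
  strong : ∀ g h : Γ, (𝒜 (g * h) : Set A) ⊆
    (AddSubgroup.closure ((𝒜 g : Set A) * (𝒜 h : Set A)) : Set A)

/-- For a subgroup `U ≤ Γ`, the subring `A(U) = ⊕_{u ∈ U} A_u` of `A`.  (For a graded ring, the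
additive subgroup `⊕_{u ∈ U} A_u` is a subring, and it coincides with the subring of `A`
generated by the pieces `𝒜 u`, `u ∈ U`, which is how we realize it here.)  Every `A`-module is
a module over this subring by restriction of scalars.  In particular `gradedSubring 𝒜 ⊥` is the
base ring `A_e` of the graded ring. -/
def gradedSubring {Γ : Type*} [Group Γ] {A : Type*} [Ring A]
    (𝒜 : Γ → AddSubgroup A) (U : Subgroup Γ) : Subring A :=
  Subring.closure (⋃ u ∈ U, (𝒜 u : Set A))

/-- Moore's condition for the triple `(Γ, H, R)`: every nontrivial `x : Γ` either generates a
cyclic subgroup meeting `H` nontrivially, or has finite order invertible in `R`. -/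
def MooreCondition {Γ : Type*} [Group Γ] (H : Subgroup Γ) (R : Type*) [Ring R] : Prop :=
  ∀ x : Γ, x ≠ 1 →
    Subgroup.zpowers x ⊓ H ≠ ⊥ ∨ (IsOfFinOrder x ∧ IsUnit ((orderOf x : R)))

/-- Moore's conjecture for the triple `(Γ, H, R)`:  if Moore's condition holds for `(Γ, H, R)`,
then for every strongly `Γ`-graded ring `A` with base ring `R` (i.e. `A_e ≅ R`), every
`A`-module `M` that is projective over the subring `A(H)` is projective over `A`. -/
def MooreConjectureTriple.{u, v} {Γ : Type*} [Group Γ] (H : Subgroup Γ)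
    (R : Type*) [Ring R] : Prop :=
  MooreCondition H R →
    ∀ (A : Type u) [Ring A] (𝒜 : Γ → AddSubgroup A), IsStronglyGraded 𝒜 →
      Nonempty (R ≃+* gradedSubring 𝒜 ⊥) →
      ∀ (M : Type v) [AddCommGroup M] [Module A M],
        Module.Projective (gradedSubring 𝒜 H) M → Module.Projective A M

/-- Moore's conjecture for the pair `(Γ, H)`: it holds for `(Γ, H, R)` for every ring `R`. -/
def MooreConjecturePair.{u, v, w} {Γ : Type*} [Group Γ] (H : Subgroup Γ) : Prop :=
  ∀ (R : Type w) [Ring R], MooreConjectureTriple.{u, v} H R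

/-- Moore's conjecture for the group `Γ`: it holds for the pair `(Γ, H)` for every subgroup
`H` of finite index in `Γ`. -/
def MooreConjectureGroup.{u, v, w} (Γ : Type*) [Group Γ] : Prop :=
  ∀ H : Subgroup Γ, H.FiniteIndex → MooreConjecturePair.{u, v, w} H


section AuxMoore
universe u' v'
open MonoidAlgebra Finsupp

theorem aux_not_projective {Γ : Type u'} [Group Γ] {R : Type v'} [Ring R]
    (x : Γ) (hfin : IsOfFinOrder x) (hu : ¬ IsUnit ((orderOf x : R))) :
    ¬ Module.Projective (MonoidAlgebra R Γ)
      ((MonoidAlgebra R Γ) ⧸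
        (Submodule.span (MonoidAlgebra R Γ) {MonoidAlgebra.single x (1:R) - 1})) := by
  intro hproj
  classical
  set A := MonoidAlgebra R Γ with hA
  set I : Submodule A A := Submodule.span A {MonoidAlgebra.single x (1:R) - 1} with hI
  set n := orderOf x with hnord
  have hn0 : 0 < n := hfin.orderOf_pos
  obtain ⟨s, hs⟩ := Module.projective_lifting_property I.mkQ LinearMap.id
    (Submodule.mkQ_surjective I)
  set e : A := s (I.mkQ 1) with he
  have hxe : MonoidAlgebra.single x (1:R) * e = e := by
    have h0 : ((MonoidAlgebra.single x (1:R) - 1 : A)) • (I.mkQ 1) = 0 := by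
      rw [← map_smul, smul_eq_mul, mul_one]
      exact (Submodule.Quotient.mk_eq_zero I).2 (Submodule.mem_span_singleton_self _)
    have := map_smul s (MonoidAlgebra.single x (1:R) - 1 : A) (I.mkQ 1)
    rw [h0, map_zero] at this
    have h2 : (MonoidAlgebra.single x (1:R) - 1 : A) * e = 0 := by
      rw [← smul_eq_mul]; exact this.symm
    exact sub_eq_zero.mp (by rwa [sub_mul, one_mul] at h2)
  have hmem : e - 1 ∈ I := by
    have h1 : I.mkQ e = I.mkQ 1 := by
      have := LinearMap.congr_fun hs (I.mkQ 1)
      simpa [he] using this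
    rwa [Submodule.mkQ_apply, Submodule.mkQ_apply, Submodule.Quotient.eq] at h1
  obtain ⟨f, hf⟩ := Submodule.mem_span_singleton.mp hmem
  rw [smul_eq_mul, mul_sub, mul_one] at hf
  set T : A → R := fun a => ∑ i ∈ Finset.range n, a.coeff (x ^ i) with hT
  have T_one : T 1 = 1 := by
    rw [hT]
    have hz : ∀ i ∈ Finset.range n, i ≠ 0 → ((1:A).coeff (x ^ i)) = 0 := by
      intro i hi h0
      have hxi : x ^ i ≠ 1 := by
        intro hxi
        exact h0 (Nat.eq_zero_of_dvd_of_lt (orderOf_dvd_of_pow_eq_one hxi)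
          (Finset.mem_range.mp hi))
      rw [MonoidAlgebra.one_def, MonoidAlgebra.coeff_single, Finsupp.single_apply,
        if_neg (fun hh => hxi hh.symm)]
    show (∑ i ∈ Finset.range n, (1:A).coeff (x ^ i)) = 1
    rw [Finset.sum_eq_single_of_mem 0 (Finset.mem_range.mpr hn0) hz]
    rw [MonoidAlgebra.one_def, MonoidAlgebra.coeff_single, pow_zero, Finsupp.single_apply, if_pos rfl]
  have T_mul : T (f * MonoidAlgebra.single x (1:R)) = T f := by
    rw [hT]
    refine Finset.sum_nbij' (fun i => (i + (n-1)) % n) (fun i => (i + 1) % n) ?_ ?_ ?_ ?_ ?_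
    · intro a _; exact Finset.mem_range.mpr (Nat.mod_lt _ hn0)
    · intro a _; exact Finset.mem_range.mpr (Nat.mod_lt _ hn0)
    · intro a ha
      show ((a + (n-1)) % n + 1) % n = a
      rw [Nat.mod_add_mod]
      have h1 : a + (n - 1) + 1 = a + n := by omega
      rw [h1, Nat.add_mod_right, Nat.mod_eq_of_lt (Finset.mem_range.mp ha)]
    · intro a ha
      show ((a + 1) % n + (n-1)) % n = a
      rw [Nat.mod_add_mod]
      have h1 : a + 1 + (n - 1) = a + n := by omega
      rw [h1, Nat.add_mod_right, Nat.mod_eq_of_lt (Finset.mem_range.mp ha)]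
    · intro a _
      have hx1 : x ^ ((a + (n - 1)) % n) = x ^ a * x⁻¹ := by
        rw [pow_mod_orderOf, pow_add]
        congr 1
        refine eq_inv_of_mul_eq_one_left ?_
        rw [← pow_succ, Nat.sub_add_cancel hn0, pow_orderOf_eq_one]
      rw [MonoidAlgebra.coeff_mul_single_apply, mul_one, hx1]
  have e_pow : ∀ i, e.coeff (x ^ i) = e.coeff 1 := by
    intro i
    induction i with
    | zero => simp
    | succ i ih =>
      have h3 : e.coeff (x ^ (i+1)) = e.coeff (x⁻¹ * x ^ (i+1)) := by
        conv_lhs => rw [← hxe]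
        rw [MonoidAlgebra.coeff_single_mul_apply, one_mul]
      rw [h3, pow_succ', inv_mul_cancel_left, ih]
  have hTe : T e = (n : R) * e.coeff 1 := by
    rw [hT]
    simp only [e_pow]
    rw [Finset.sum_const, Finset.card_range, nsmul_eq_mul]
  have happ : ∀ g : Γ, (f * MonoidAlgebra.single x (1:R)).coeff g - f.coeff g = e.coeff g - (1:A).coeff g := by
    intro g
    rw [← Finsupp.sub_apply, ← MonoidAlgebra.coeff_sub, hf, MonoidAlgebra.coeff_sub, Finsupp.sub_apply]
  have hTsub : T (f * MonoidAlgebra.single x (1:R)) - T f = T e - T 1 := by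
    rw [hT]
    simp only [← Finset.sum_sub_distrib]
    exact Finset.sum_congr rfl fun i _ => happ (x ^ i)
  rw [T_mul, sub_self] at hTsub
  have hTe1 : T e = 1 := by
    have h4 := sub_eq_zero.mp hTsub.symm
    rw [T_one] at h4
    exact h4
  have h1 : (n : R) * e.coeff 1 = 1 := by rw [← hTe, hTe1]
  have h2 : e.coeff 1 * (n : R) = 1 := by rw [← (Nat.cast_commute n (e.coeff 1)).eq]; exact h1
  exact hu ⟨⟨(n:R), e.coeff 1, h1, h2⟩, rfl⟩


theorem aux_free {Γ : Type u'} [Group Γ] {R : Type v'} [Ring R] (H : Subgroup Γ) [H.Normal]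
    (x : Γ) (hfin : IsOfFinOrder x) (hbot : Subgroup.zpowers x ⊓ H = ⊥) :
    @Module.Free (MonoidAlgebra R ↥H)
      (MonoidAlgebra R Γ ⧸
        Submodule.span (MonoidAlgebra R Γ) {MonoidAlgebra.single x (1:R) - 1})
      _ _
      (Module.compHom _ (MonoidAlgebra.mapDomainRingHom R H.subtype)) := by
  classical
  set A := MonoidAlgebra R Γ with hAdef
  set C := Subgroup.zpowers x with hCdef
  set I : Submodule A A := Submodule.span A {MonoidAlgebra.single x (1:R) - 1} with hIdef
  letI instRH : Module (MonoidAlgebra R ↥H) (A ⧸ I) :=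
    Module.compHom _ (MonoidAlgebra.mapDomainRingHom R H.subtype)
  -- uniqueness of (h, c) in h * s * c decompositions
  have key : ∀ (s h h' c c' : Γ), h ∈ H → h' ∈ H → c ∈ C → c' ∈ C →
      h * s * c = h' * s * c' → h = h' ∧ c = c' := by
    intro s h h' c c' hh hh' hc hc' heq
    have e1 : h'⁻¹ * (h * s * c) = s * c' := by rw [heq]; simp [mul_assoc]
    have e2 : h'⁻¹ * (h * s * c) * c⁻¹ = s * c' * c⁻¹ := by rw [e1]
    have e3 : h'⁻¹ * (h * s) = s * (c' * c⁻¹) := by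
      calc h'⁻¹ * (h * s) = h'⁻¹ * (h * s * c) * c⁻¹ := by simp [mul_assoc]
        _ = s * (c' * c⁻¹) := by rw [e2, mul_assoc]
    have h9 : c' * c⁻¹ = s⁻¹ * (h'⁻¹ * h) * s := by
      calc c' * c⁻¹ = s⁻¹ * (s * (c' * c⁻¹)) := by rw [inv_mul_cancel_left]
        _ = s⁻¹ * (h'⁻¹ * (h * s)) := by rw [e3]
        _ = s⁻¹ * (h'⁻¹ * h) * s := by simp [mul_assoc]
    have hccH : c' * c⁻¹ ∈ H := by
      rw [h9]
      simpa using ‹H.Normal›.conj_mem _ (H.mul_mem (H.inv_mem hh') hh) s⁻¹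
    have hccC : c' * c⁻¹ ∈ C := C.mul_mem hc' (C.inv_mem hc)
    have h1 : c' * c⁻¹ = 1 := by
      have hm : c' * c⁻¹ ∈ C ⊓ H := ⟨hccC, hccH⟩
      rw [hbot] at hm
      exact hm
    have hcc : c = c' := (mul_inv_eq_one.mp h1).symm
    subst hcc
    exact ⟨mul_right_cancel (mul_right_cancel heq), rfl⟩
  -- decomposition functions
  have hdec : ∀ g : Γ, ∃ h c : Γ, h ∈ H ∧ c ∈ C ∧ g = h * (DoubleCoset.mk H C g).out * c := by
    intro g
    obtain ⟨h, k, hh, hk, hout⟩ := DoubleCoset.mk_out_eq_mul H C g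
    exact ⟨h⁻¹, k⁻¹, H.inv_mem hh, C.inv_mem hk, by rw [hout]; simp [mul_assoc]⟩
  choose hp cp hpH cpC hspec using hdec
  -- basic coherence facts
  have fact_mk : ∀ (h g c : Γ), h ∈ H → c ∈ C →
      DoubleCoset.mk H C (h * g * c) = DoubleCoset.mk H C g := by
    intro h g c hh hc
    exact ((DoubleCoset.eq _ _ _ _).2 ⟨h, hh, c, hc, rfl⟩).symm
  have fact_hpcp : ∀ (h g c : Γ), h ∈ H → c ∈ C →
      hp (h * g * c) = h * hp g ∧ cp (h * g * c) = cp g * c := by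
    intro h g c hh hc
    have hmk := fact_mk h g c hh hc
    have e1 := hspec (h * g * c)
    rw [hmk] at e1
    have e2 : h * g * c = (h * hp g) * (DoubleCoset.mk H C g).out * (cp g * c) := by
      conv_lhs => rw [hspec g]
      simp [mul_assoc]
    have := key ((DoubleCoset.mk H C g).out) _ _ _ _ (hpH _) (H.mul_mem hh (hpH g))
      (cpC _) (C.mul_mem (cpC g) hc) (e1.symm.trans e2)
    exact this
  have fact_out : ∀ s : DoubleCoset.Quotient (↑H : Set Γ) (↑C : Set Γ),
      hp s.out = 1 ∧ cp s.out = 1 := by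
    intro s
    have e1 := hspec s.out
    rw [DoubleCoset.out_eq'] at e1
    have e2 : s.out = 1 * s.out * 1 := by simp
    have := key s.out _ _ _ _ (hpH _) H.one_mem (cpC _) C.one_mem (e1.symm.trans e2)
    exact this
  -- the index type and auxiliary notation
  set hpp : Γ → ↥H := fun g => ⟨hp g, hpH g⟩ with hhpp
  have hxC : x ∈ C := Subgroup.mem_zpowers x
  -- multiplying by an element of C on the right does not change the class in the quotient
  have L1 : ∀ c ∈ C, ∀ u : A, (Submodule.Quotient.mk (u * MonoidAlgebra.single c (1:R)) : A ⧸ I)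
      = Submodule.Quotient.mk u := by
    intro c hc u
    obtain ⟨m, hm⟩ := (hfin.mem_powers_iff_mem_zpowers).2 hc
    have hsub : ∀ m : ℕ, (MonoidAlgebra.single (x ^ m) (1:R) - 1 : A) ∈ I := by
      intro m
      induction m with
      | zero =>
        rw [pow_zero, ← MonoidAlgebra.one_def, sub_self]
        exact I.zero_mem
      | succ m ih =>
        have e : (MonoidAlgebra.single (x ^ (m+1)) (1:R) - 1 : A)
            = MonoidAlgebra.single (x ^ m) (1:R) * (MonoidAlgebra.single x (1:R) - 1)
              + (MonoidAlgebra.single (x ^ m) (1:R) - 1) := by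
          rw [mul_sub, mul_one, MonoidAlgebra.single_mul_single, mul_one, ← pow_succ]
          abel
        rw [e]
        refine I.add_mem ?_ ih
        have h5 := I.smul_mem (MonoidAlgebra.single (x ^ m) (1:R))
          (Submodule.mem_span_singleton_self (MonoidAlgebra.single x (1:R) - 1 : A))
        rwa [smul_eq_mul] at h5
    rw [Submodule.Quotient.eq]
    have h6 : u * MonoidAlgebra.single c (1:R) - u = u • (MonoidAlgebra.single c (1:R) - 1) := by
      rw [smul_eq_mul, mul_sub, mul_one]
    rw [h6, ← hm]
    exact I.smul_mem u (hsub m)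
  -- the map G : A → ⊕_{HgC} RH
  set G : A →ₗ[R] (DoubleCoset.Quotient (↑H : Set Γ) (↑C : Set Γ) →₀ MonoidAlgebra R ↥H) :=
    (Finsupp.lsum ℕ (fun g : Γ =>
      (Finsupp.lsingle (DoubleCoset.mk H C g)).comp (MonoidAlgebra.lsingle (hpp g)))).comp
      (MonoidAlgebra.coeffLinearEquiv R).toLinearMap with hG
  have G_single : ∀ (g : Γ) (r : R), G (MonoidAlgebra.single g r)
      = Finsupp.single (DoubleCoset.mk H C g) (MonoidAlgebra.single (hpp g) r) := by
    intro g r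
    rw [hG, LinearMap.comp_apply]
    exact Finsupp.lsum_single _ _ _ _
  have hGmulx : ∀ u : A, G (u * MonoidAlgebra.single x (1:R)) = G u := by
    intro u
    induction u using MonoidAlgebra.induction_linear with
    | zero => rw [zero_mul]
    | add f g hf hg => rw [add_mul, map_add, map_add, hf, hg]
    | single g r =>
      have hsm : MonoidAlgebra.single g r * MonoidAlgebra.single x (1:R)
          = MonoidAlgebra.single (g * x) r := by
        rw [MonoidAlgebra.single_mul_single, mul_one]
      rw [hsm, G_single, G_single]
      have h1 : DoubleCoset.mk H C (g * x) = DoubleCoset.mk H C g := by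
        have h2 := fact_mk 1 g x H.one_mem hxC
        rwa [one_mul] at h2
      have h2 : hpp (g * x) = hpp g := by
        refine Subtype.ext ?_
        have h3 := (fact_hpcp 1 g x H.one_mem hxC).1
        rw [one_mul] at h3
        rw [hhpp]
        simpa using h3
      rw [h1, h2]
  have hker : Submodule.restrictScalars R I ≤ LinearMap.ker G := by
    intro u hu
    rw [LinearMap.mem_ker]
    obtain ⟨f, hf⟩ := Submodule.mem_span_singleton.mp (hu : u ∈ I)
    rw [← hf, smul_eq_mul, mul_sub, mul_one, map_sub, hGmulx, sub_self]
  set GbarL : (A ⧸ I) →ₗ[R] (DoubleCoset.Quotient (↑H : Set Γ) (↑C : Set Γ) →₀ MonoidAlgebra R ↥H) :=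
    (Submodule.liftQ (Submodule.restrictScalars R I) G hker).comp
      (Submodule.Quotient.restrictScalarsEquiv R I).symm.toLinearMap with hGbarL
  have Gbar_mk : ∀ u : A, GbarL (Submodule.Quotient.mk u) = G u := by
    intro u
    rw [hGbarL]
    simp [Submodule.Quotient.restrictScalarsEquiv_symm_mk, Submodule.liftQ_apply]
  -- the inverse map F
  set Fm : (DoubleCoset.Quotient (↑H : Set Γ) (↑C : Set Γ) →₀ MonoidAlgebra R ↥H) →+ (A ⧸ I) :=
    Finsupp.liftAddHom (fun s => (I.mkQ.toAddMonoidHom.comp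
      ((AddMonoidHom.mulRight (MonoidAlgebra.single (Quotient.out s) (1:R))).comp
        (MonoidAlgebra.mapDomainRingHom R H.subtype).toAddMonoidHom))) with hFm
  have F_single : ∀ (s : DoubleCoset.Quotient (↑H : Set Γ) (↑C : Set Γ)) (a : MonoidAlgebra R ↥H),
      Fm (Finsupp.single s a) = Submodule.Quotient.mk
        ((MonoidAlgebra.mapDomainRingHom R H.subtype a)
          * MonoidAlgebra.single (Quotient.out s) (1:R)) := by
    intro s a
    exact Finsupp.liftAddHom_apply_single _ _ _
  have hmd : ∀ (h : ↥H) (rh : R), (MonoidAlgebra.mapDomainRingHom R H.subtype)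
      (MonoidAlgebra.single h rh) = MonoidAlgebra.single ((h : Γ)) rh := by
    intro h rh
    simp [MonoidAlgebra.mapDomainRingHom]
  have hcoe : ∀ g : Γ, ((hpp g : ↥H) : Γ) = hp g := fun g => rfl
  have hss : ∀ (b : MonoidAlgebra R ↥H) (s' : DoubleCoset.Quotient (↑H : Set Γ) (↑C : Set Γ))
      (c : MonoidAlgebra R ↥H),
      b • (Finsupp.single s' c : DoubleCoset.Quotient (↑H : Set Γ) (↑C : Set Γ) →₀ MonoidAlgebra R ↥H)
        = Finsupp.single s' (b * c) := by
    intro b s' c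
    rw [Finsupp.smul_single, smul_eq_mul]
  have id2 : ∀ u : A, Fm (G u) = Submodule.Quotient.mk u := by
    intro u
    induction u using MonoidAlgebra.induction_linear with
    | zero => simp
    | add f g hf hg => rw [map_add, map_add, hf, hg, ← Submodule.Quotient.mk_add]
    | single g r =>
      rw [G_single, F_single, hmd, hcoe, MonoidAlgebra.single_mul_single, mul_one]
      conv_rhs => rw [hspec g]
      have h8 : (Submodule.Quotient.mk
            (MonoidAlgebra.single (hp g * Quotient.out (DoubleCoset.mk H C g) * cp g) r) : A ⧸ I)
          = Submodule.Quotient.mk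
            (MonoidAlgebra.single (hp g * Quotient.out (DoubleCoset.mk H C g)) r
              * MonoidAlgebra.single (cp g) (1:R)) := by
        congr 1
        rw [MonoidAlgebra.single_mul_single, mul_one]
      rw [h8, L1 (cp g) (cpC g)]
  have id1 : ∀ p, GbarL (Fm p) = p := by
    intro p
    induction p using Finsupp.induction_linear with
    | zero => simp
    | add f g hf hg => rw [map_add, map_add GbarL, hf, hg]
    | single s a =>
      induction a using MonoidAlgebra.induction_linear with
      | zero => rw [Finsupp.single_zero, map_zero, map_zero]
      | add a b ha hb => rw [Finsupp.single_add, map_add, map_add GbarL, ha, hb]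
      | single h r =>
        rw [F_single, hmd, MonoidAlgebra.single_mul_single, mul_one,
          Gbar_mk, G_single]
        have h1 : DoubleCoset.mk H C ((h : Γ) * (Quotient.out s)) = s := by
          have h4 := fact_mk (h : Γ) (Quotient.out s) 1 h.2 C.one_mem
          rw [mul_one] at h4
          rw [h4, DoubleCoset.out_eq']
        have h2 : hpp ((h : Γ) * Quotient.out s) = h := by
          refine Subtype.ext ?_
          have h3 := (fact_hpcp (h : Γ) (Quotient.out s) 1 h.2 C.one_mem).1
          rw [mul_one] at h3
          rw [hhpp]
          simpa [(fact_out s).1] using h3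
        rw [h1, h2]
  -- G intertwines the RH-action
  have hGsmul : ∀ (a : MonoidAlgebra R ↥H) (u : A),
      G ((MonoidAlgebra.mapDomainRingHom R H.subtype a) * u) = a • G u := by
    intro a u
    induction u using MonoidAlgebra.induction_linear with
    | zero => rw [mul_zero, map_zero, smul_zero]
    | add f g hf hg => rw [mul_add, map_add, map_add, hf, hg, smul_add]
    | single g r =>
      induction a using MonoidAlgebra.induction_linear with
      | zero => rw [map_zero, zero_mul, map_zero, zero_smul]
      | add a b ha hb => rw [map_add, add_mul, map_add, ha, hb, add_smul]
      | single h rh =>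
        rw [hmd, show (MonoidAlgebra.single ((h:Γ)) rh * MonoidAlgebra.single g r
              : MonoidAlgebra R Γ)
            = MonoidAlgebra.single ((h:Γ) * g) (rh * r) from MonoidAlgebra.single_mul_single _ _ _ _,
          G_single, G_single, hss]
        have h1 : DoubleCoset.mk H C ((h : Γ) * g) = DoubleCoset.mk H C g := by
          have h4 := fact_mk (h : Γ) g 1 h.2 C.one_mem
          rwa [mul_one] at h4
        have h2 : hpp ((h : Γ) * g) = h * hpp g := by
          refine Subtype.ext ?_
          have h3 := (fact_hpcp (h : Γ) g 1 h.2 C.one_mem).1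
          rw [mul_one] at h3
          rw [hhpp]
          simpa using h3
        rw [h1, h2, MonoidAlgebra.single_mul_single]
  have hsmul' : ∀ (a : MonoidAlgebra R ↥H) (m : A ⧸ I), GbarL (a • m) = a • GbarL m := by
    intro a m
    obtain ⟨u, rfl⟩ := Submodule.Quotient.mk_surjective I m
    have hmk : a • (Submodule.Quotient.mk u : A ⧸ I) = Submodule.Quotient.mk
        ((MonoidAlgebra.mapDomainRingHom R H.subtype a) * u) := by
      show (MonoidAlgebra.mapDomainRingHom R H.subtype a) • (Submodule.Quotient.mk u : A ⧸ I) = _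
      rw [← Submodule.Quotient.mk_smul, smul_eq_mul]
    rw [hmk, Gbar_mk, Gbar_mk, hGsmul]
  -- assemble the basis
  refine Module.Free.of_basis (Module.Basis.ofRepr (LinearEquiv.mk
    (⟨⟨GbarL, fun a b => map_add GbarL a b⟩, fun a m => hsmul' a m⟩ :
      (A ⧸ I) →ₗ[MonoidAlgebra R ↥H] _) Fm ?_ ?_))
  · intro m
    obtain ⟨u, rfl⟩ := Submodule.Quotient.mk_surjective I m
    show Fm (GbarL _) = _
    rw [Gbar_mk]
    exact id2 u
  · intro p
    exact id1 p

end AuxMoore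

/-- **Proposition 2.7.**  Let `H` be a normal subgroup of finite index in `Γ` and `R` a ring.
If Moore's condition does not hold for the triple `(Γ, H, R)`, then there is a left module
`M` over the group ring `RΓ` which is free over the subring `RH` (via restriction of scalars
along `RH →+* RΓ`) but is not projective over `RΓ`. -/

theorem exists_nonprojective_of_not_mooreCondition.{u, v} {Γ : Type u} [Group Γ]
    (H : Subgroup Γ) [H.Normal] (hH : H.FiniteIndex) (R : Type v) [Ring R]
    (h : ¬ MooreCondition H R) :
    ∃ (M : Type (max u v)) (instM : AddCommGroup M)
      (instMod : Module (MonoidAlgebra R Γ) M),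
      (@Module.Free (MonoidAlgebra R ↥H) M _ instM.toAddCommMonoid
        (@Module.compHom (MonoidAlgebra R Γ) (MonoidAlgebra R ↥H) M _
          instM.toAddCommMonoid instMod _
          (MonoidAlgebra.mapDomainRingHom R H.subtype))) ∧
      ¬ @Module.Projective (MonoidAlgebra R Γ) _ M instM.toAddCommMonoid instMod := by
  classical
  rw [MooreCondition] at h
  push_neg at h
  obtain ⟨x, hx1, hxbot, hxnot⟩ := h
  haveI := hH
  have hfin : IsOfFinOrder x := by
    haveI : Finite (Γ ⧸ H) := H.finite_quotient_of_finiteIndex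
    set m := orderOf (QuotientGroup.mk x : Γ ⧸ H) with hm
    have hfin' : IsOfFinOrder (QuotientGroup.mk x : Γ ⧸ H) :=
      finite_powers.mp (Set.toFinite _)
    have hm0 : 0 < m := hfin'.orderOf_pos
    have hxm : x ^ m ∈ H := by
      have h2 : (QuotientGroup.mk (x ^ m) : Γ ⧸ H) = 1 := by
        rw [QuotientGroup.mk_pow]
        exact pow_orderOf_eq_one _
      exact (QuotientGroup.eq_one_iff _).1 h2
    have h3 : x ^ m ∈ Subgroup.zpowers x ⊓ H :=
      ⟨Subgroup.pow_mem _ (Subgroup.mem_zpowers x) m, hxm⟩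
    rw [hxbot, Subgroup.mem_bot] at h3
    exact isOfFinOrder_iff_pow_eq_one.mpr ⟨m, hm0, h3⟩
  have hu : ¬ IsUnit ((orderOf x : R)) := fun hu => hxnot hfin hu
  exact ⟨MonoidAlgebra R Γ ⧸
      Submodule.span (MonoidAlgebra R Γ) {MonoidAlgebra.single x (1:R) - 1},
    inferInstance, inferInstance, aux_free H x hfin hxbot, aux_not_projective x hfin hu⟩
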